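/- With the same recurrence (a_1 = 1, parameters A ≠ 0, B), one has a_4 = -B·(B² + 3·B + 20)/(1290240·A³). -/

import Mathlib

section Recurrence

variable {A B : ℝ} {a : ℕ → ℝ}
  (hrec : ∀ n : ℕ, 2 ≤ n →
    a n = -(1 / (8 * A * (n : ℝ) * (2 * (n : ℝ) - 1) * ((n : ℝ) - 1))) *
      ∑ k ∈ Finset.Icc 1 (n - 1), a (n - k) *
        ((k : ℝ) * ((6 - B) * (k : ℝ) - 2 - (2 - B) * (n : ℝ)) * a k +
          8 * A * ((k : ℝ) + 1) * ((n : ℝ) - (k : ℝ)) * (2 * (n : ℝ) - 2 * (k : ℝ) - 1) *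
            ((n : ℝ) - (k : ℝ) - 1) * a (k + 1)))
include hrec

theorem recurrence_at_two :
    a 2 = -(1 / (48 * A)) * (B * a 1 ^ 2) := by
  have h := hrec 2 le_rfl
  norm_num [show Finset.Icc 1 1 = {1} from rfl] at h
  rw [h]
  ring

theorem recurrence_at_three :
    a 3 = -(1 / (240 * A)) *
      (a 2 * ((2 * B - 2) * a 1 + 96 * A * a 2) + 2 * (B + 4) * a 1 * a 2) := by
  have h := hrec 3 (by norm_num)
  norm_num [show Finset.Icc 1 2 = {1, 2} from rfl] at h
  rw [h]
  ring

theorem recurrence_at_four :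
    a 4 = -(1 / (672 * A)) *
      (a 3 * ((3 * B - 4) * a 1 + 480 * A * a 2) + a 2 * (2 * (2 * B + 2) * a 2 + 144 * A * a 3)
        + 3 * (B + 8) * a 1 * a 3) := by
  have h := hrec 4 (by norm_num)
  norm_num [show Finset.Icc 1 3 = {1, 2, 3} from rfl] at h
  rw [h]
  ring

end Recurrence

theorem a4_value (A B : ℝ) (hA : A ≠ 0) (a : ℕ → ℝ)
    (h1 : a 1 = 1)
    (hrec : ∀ n : ℕ, 2 ≤ n →
      a n = -(1 / (8 * A * (n : ℝ) * (2 * (n : ℝ) - 1) * ((n : ℝ) - 1))) *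
        ∑ k ∈ Finset.Icc 1 (n - 1), a (n - k) *
          ((k : ℝ) * ((6 - B) * (k : ℝ) - 2 - (2 - B) * (n : ℝ)) * a k +
            8 * A * ((k : ℝ) + 1) * ((n : ℝ) - (k : ℝ)) * (2 * (n : ℝ) - 2 * (k : ℝ) - 1) *
              ((n : ℝ) - (k : ℝ) - 1) * a (k + 1))) :
    a 4 = -B * (B ^ 2 + 3 * B + 20) / (1290240 * A ^ 3) := by
  have h2 : a 2 = -B / (48 * A) := by
    rw [recurrence_at_two hrec, h1]
    field_simp
  have h3 : a 3 = B * (B + 3) / (5760 * A ^ 2) := by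
    rw [recurrence_at_three hrec, h1, h2]
    field_simp
    ring
  rw [recurrence_at_four hrec, h1, h2, h3]
  field_simp
  ring
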